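/- Let a > 100 be an integer and let ρ₁, ρ₂, ρ₃ be the three real roots of f_a. Then for every integer x with x ∉ {0, 1, -1} and each sign s ∈ {1, -1}, the absolute value of the product (ρ₁^x + s)·(ρ₂^x + s)·(ρ₃^x + s) is strictly greater than a. (Equivalently, |N_{K/ℚ}(ε^x ± 1)| > a, where ε = ρ₁.) -/

import Mathlib

/-! For `|s| = 1` the reverse triangle inequality gives `|u ^ n + s| ≥ ||u| ^ n - 1|`, and when
`c` lies between `1` and `|u|` and `n ≥ 2`, the power `|u| ^ n` is at least as far from `1` as
`c ^ 2`. The root bounds provide such `c` for each root: `a + 1`, `(a + 3)/(a + 2)` and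
`1/(a + 2)`, and their reciprocals for the reciprocal roots, which handle negative exponents.
In both cases the product of the three numbers `|c ^ 2 - 1|` is an explicit rational function
of `a` exceeding `a`. -/

open Set Interval

lemma abs_sq_sub_one_le_abs_pow_sub_one {c r : ℝ} (hr : 0 ≤ r) (hcr : c ∈ [[1, r]]) {n : ℕ}
    (hn : 2 ≤ n) : |c ^ 2 - 1| ≤ |r ^ n - 1| := by
  rcases mem_uIcc.1 hcr with ⟨h1c, hcr⟩ | ⟨hrc, hc1⟩
  · have : c ^ 2 ≤ r ^ n :=
      (pow_le_pow_right₀ h1c hn).trans (pow_le_pow_left₀ (by linarith) hcr n)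
    have := one_le_pow₀ (n := 2) h1c
    rw [abs_of_nonneg (by linarith), abs_of_nonneg (by linarith)]
    linarith
  · have : r ^ n ≤ c ^ 2 :=
      (pow_le_pow_left₀ hr hrc n).trans (pow_le_pow_of_le_one (hr.trans hrc) hc1 hn)
    have := pow_le_one₀ (n := 2) (hr.trans hrc) hc1
    rw [abs_of_nonpos (by linarith), abs_of_nonpos (by linarith)]
    linarith

lemma abs_sq_sub_one_le_abs_pow_add {c u s : ℝ} (hs : |s| = 1) (hcu : c ∈ [[1, |u|]]) {n : ℕ}
    (hn : 2 ≤ n) : |c ^ 2 - 1| ≤ |u ^ n + s| :=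
  calc |c ^ 2 - 1| ≤ |(|u| ^ n - 1)| := abs_sq_sub_one_le_abs_pow_sub_one (abs_nonneg u) hcu hn
    _ = |(|u ^ n| - |-s|)| := by rw [abs_neg, hs, abs_pow]
    _ ≤ |u ^ n - -s| := abs_abs_sub_abs_le_abs_sub _ _
    _ = |u ^ n + s| := by rw [sub_neg_eq_add]

lemma lt_abs_mul_pow_add {A s c₁ c₂ c₃ u₁ u₂ u₃ : ℝ} (hs : |s| = 1) (h₁ : c₁ ∈ [[1, |u₁|]])
    (h₂ : c₂ ∈ [[1, |u₂|]]) (h₃ : c₃ ∈ [[1, |u₃|]])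
    (hA : A < |c₁ ^ 2 - 1| * |c₂ ^ 2 - 1| * |c₃ ^ 2 - 1|) {n : ℕ} (hn : 2 ≤ n) :
    A < |(u₁ ^ n + s) * (u₂ ^ n + s) * (u₃ ^ n + s)| :=
  calc A < |c₁ ^ 2 - 1| * |c₂ ^ 2 - 1| * |c₃ ^ 2 - 1| := hA
    _ ≤ |u₁ ^ n + s| * |u₂ ^ n + s| * |u₃ ^ n + s| := by
      gcongr ?_ * ?_ * ?_ <;> exact abs_sq_sub_one_le_abs_pow_add hs ‹_› hn
    _ = _ := by rw [abs_mul, abs_mul]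

lemma inv_mem_uIcc_one_abs_inv {c u : ℝ} (hc : 0 < c) (hu : u ≠ 0) (h : c ∈ [[1, |u|]]) :
    c⁻¹ ∈ [[1, |u⁻¹|]] := by
  rw [abs_inv]
  rcases mem_uIcc.1 h with ⟨h1c, hcu⟩ | ⟨huc, hc1⟩
  · exact mem_uIcc_of_ge (inv_anti₀ hc hcu) (inv_le_one_of_one_le₀ h1c)
  · exact mem_uIcc_of_le (one_le_inv₀ hc |>.2 hc1) (inv_anti₀ (abs_pos.2 hu) huc)

lemma lt_mul_abs_sq_sub_one {A : ℝ} (hA : 0 < A) :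
    A < |(A + 1) ^ 2 - 1| * |((A + 3) / (A + 2)) ^ 2 - 1| * |(1 / (A + 2)) ^ 2 - 1| := by
  have h2 : 0 < A + 2 := by linarith
  rw [abs_of_pos (by nlinarith), abs_of_pos, abs_of_neg]
  · rw [div_pow, div_pow]
    field_simp
    -- `(2A + 5)(A + 1)(A + 3) - (A + 2)³ = A³ + 7A² + 14A + 7`
    nlinarith [mul_pos (mul_pos hA h2) (show 0 < A ^ 3 + 7 * A ^ 2 + 14 * A + 7 by positivity)]
  · rw [sub_neg, div_pow, one_pow, div_lt_one (by positivity)]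
    nlinarith
  · rw [div_pow, sub_pos, one_lt_div (by positivity)]
    nlinarith

lemma lt_mul_abs_inv_sq_sub_one {A : ℝ} (hA : 0 < A) :
    A < |(A + 1)⁻¹ ^ 2 - 1| * |((A + 3) / (A + 2))⁻¹ ^ 2 - 1| * |(1 / (A + 2))⁻¹ ^ 2 - 1| := by
  have h1 : 0 < A + 1 := by linarith
  have h3 : 0 < A + 3 := by linarith
  rw [inv_div, one_div, inv_inv, abs_of_neg, abs_of_neg, abs_of_pos (by nlinarith)]
  · rw [div_pow, inv_pow]
    field_simp
    -- `(A + 2)(2A + 5) - (A + 1)(A + 3) = A² + 5A + 7`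
    nlinarith [mul_pos (mul_pos hA h1) (show 0 < A ^ 2 + 5 * A + 7 by positivity)]
  · rw [sub_neg, div_pow, div_lt_one (by positivity)]
    nlinarith
  · rw [sub_neg, inv_pow, inv_lt_one₀ (by positivity)]
    nlinarith

theorem norm_lower_bound (a : ℤ) (ha : 100 < a) (ρ₁ ρ₂ ρ₃ : ℝ)
    (hb₁ : (a : ℝ) + 1 < ρ₁)
    (hb₂' : ρ₂ < -1 - 1/((a : ℝ) + 2))
    (hb₃ : -1/((a : ℝ) + 2) < ρ₃) (hb₃' : ρ₃ < -1/((a : ℝ) + 3))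
    (x : ℤ) (hx0 : x ≠ 0) (hx1 : x ≠ 1) (hx1' : x ≠ -1)
    (s : ℝ) (hs : s = 1 ∨ s = -1) :
    (a : ℝ) < |(ρ₁ ^ x + s) * (ρ₂ ^ x + s) * (ρ₃ ^ x + s)| := by
  set A : ℝ := (a : ℝ)
  have hA : 0 < A := Int.cast_pos.2 (by omega)
  have hs₁ : |s| = 1 := by rcases hs with rfl | rfl <;> simp
  have hρ₁ : 0 < ρ₁ := by linarith
  have hρ₂ : ρ₂ < 0 := hb₂'.trans (by linarith [one_div_pos.2 (by linarith : 0 < A + 2)])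
  have hρ₃ : ρ₃ < 0 := hb₃'.trans (by rw [neg_div]; exact neg_neg_of_pos (by positivity))
  have h₁ : A + 1 ∈ [[1, |ρ₁|]] := mem_uIcc_of_le (by linarith) (by rw [abs_of_pos hρ₁]; linarith)
  have h₂ : (A + 3) / (A + 2) ∈ [[1, |ρ₂|]] := by
    refine mem_uIcc_of_le ((one_le_div (by linarith)).2 (by linarith)) ?_
    rw [abs_of_neg hρ₂, show (A + 3) / (A + 2) = 1 + 1 / (A + 2) by field_simp; ring]
    linarith
  have h₃ : 1 / (A + 2) ∈ [[1, |ρ₃|]] := by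
    refine mem_uIcc_of_ge ?_ ((div_le_one (by linarith)).2 (by linarith))
    rw [neg_div] at hb₃
    rw [abs_of_neg hρ₃]
    linarith
  obtain ⟨n, hn, rfl | rfl⟩ : ∃ n : ℕ, 2 ≤ n ∧ (x = n ∨ x = -n) := by
    obtain ⟨n, rfl | rfl⟩ := x.eq_nat_or_neg <;> exact ⟨n, by omega, by simp⟩
  · simp only [zpow_natCast]
    exact lt_abs_mul_pow_add hs₁ h₁ h₂ h₃ (lt_mul_abs_sq_sub_one hA) hn
  · simp only [zpow_neg, zpow_natCast, ← inv_pow]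
    exact lt_abs_mul_pow_add hs₁ (inv_mem_uIcc_one_abs_inv (by positivity) hρ₁.ne' h₁)
      (inv_mem_uIcc_one_abs_inv (by positivity) hρ₂.ne h₂)
      (inv_mem_uIcc_one_abs_inv (by positivity) hρ₃.ne h₃) (lt_mul_abs_inv_sq_sub_one hA) hn
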